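/- Let p ≥ 1 be an integer, let k > 0 be a real number, and let P = {v ∈ {0,1}^p : v₁ = 1}. For every function λ : P → ℝ with λ(v) ≥ 0 for all v ∈ P and Σ_{v∈P} λ(v) = k, one has det( Σ_{v∈P} λ(v)·v vᵀ ) ≤ k^p / 2^{2(p−1)}. -/

import Mathlib

/-! The matrix `C = 2I - 𝟙 e₁ᵀ` sends every `v ∈ P` to the ±1 vector `2v - 𝟙`, so `|Cv|² = p`
on `P`; equivalently `vᵀ Λ v = p / k` for the dual matrix `Λ = CᵀC / k`. Hence for the
information matrix `M = Σ λ(v) v vᵀ`, the matrix `C M Cᵀ` is positive semidefinite with trace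
`p k`, AM–GM on its eigenvalues gives `det (C M Cᵀ) ≤ k ^ p`, and
`det (C M Cᵀ) = (det C)² det M = 2 ^ (2 (p - 1)) det M`. -/

open Matrix BigOperators

theorem Real.prod_le_sum_div_card_pow {ι : Type*} (s : Finset ι) {z : ι → ℝ}
    (hz : ∀ i ∈ s, 0 ≤ z i) : ∏ i ∈ s, z i ≤ ((∑ i ∈ s, z i) / s.card) ^ s.card := by
  rcases s.eq_empty_or_nonempty with rfl | hs
  · simp
  have hcard : (0 : ℝ) < s.card := by exact_mod_cast hs.card_pos
  have amgm := Real.geom_mean_le_arith_mean_weighted s (fun _ => (s.card : ℝ)⁻¹) z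
    (fun _ _ => by positivity) (by simp [hcard.ne']) hz
  rwa [Real.finsetProd_rpow s z hz, ← Finset.mul_sum, inv_mul_eq_div,
    Real.rpow_inv_le_iff_of_pos (Finset.prod_nonneg hz)
      (div_nonneg (Finset.sum_nonneg hz) hcard.le) hcard,
    Real.rpow_natCast] at amgm

namespace Matrix

theorem PosSemidef.det_le_trace_div_card_pow {n : Type*} [Fintype n] [DecidableEq n]
    {A : Matrix n n ℝ} (hA : A.PosSemidef) :
    A.det ≤ (A.trace / Fintype.card n) ^ Fintype.card n := by
  rw [hA.1.det_eq_prod_eigenvalues, hA.1.trace_eq_sum_eigenvalues]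
  simpa using Real.prod_le_sum_div_card_pow Finset.univ fun i _ => hA.eigenvalues_nonneg i

section WeightedGram

variable {ι n : Type*} [Fintype n]

theorem mul_sum_smul_vecMulVec_mul_transpose {α : Type*} [CommSemiring α]
    (S : Finset ι) (w : ι → α) (v : ι → n → α) (C : Matrix n n α) :
    C * (∑ s ∈ S, w s • vecMulVec (v s) (v s)) * Cᵀ =
      ∑ s ∈ S, w s • vecMulVec (C *ᵥ v s) (C *ᵥ v s) := by
  rw [Matrix.mul_sum, Matrix.sum_mul]
  refine Finset.sum_congr rfl fun s _ => ?_
  rw [Matrix.mul_smul, Matrix.smul_mul, mul_vecMulVec, vecMulVec_mul, vecMul_transpose]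

theorem posSemidef_sum_smul_vecMulVec_self (S : Finset ι) {w : ι → ℝ}
    (hw : ∀ s ∈ S, 0 ≤ w s) (v : ι → n → ℝ) :
    (∑ s ∈ S, w s • vecMulVec (v s) (v s)).PosSemidef :=
  posSemidef_sum S fun s hs => (posSemidef_vecMulVec_self_star (v s)).smul (hw s hs)

theorem trace_sum_smul_vecMulVec_self (S : Finset ι) (w : ι → ℝ) (v : ι → n → ℝ) :
    (∑ s ∈ S, w s • vecMulVec (v s) (v s)).trace = ∑ s ∈ S, w s * (v s ⬝ᵥ v s) := by
  simp only [trace_sum, trace_smul, trace_vecMulVec, smul_eq_mul]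

theorem sq_det_mul_det_sum_smul_vecMulVec_le [DecidableEq n] (S : Finset ι) {w : ι → ℝ}
    (hw : ∀ s ∈ S, 0 ≤ w s) (v : ι → n → ℝ) (C : Matrix n n ℝ) {c : ℝ}
    (hC : ∀ s ∈ S, (C *ᵥ v s) ⬝ᵥ (C *ᵥ v s) ≤ c) :
    C.det ^ 2 * (∑ s ∈ S, w s • vecMulVec (v s) (v s)).det ≤
      (c * (∑ s ∈ S, w s) / Fintype.card n) ^ Fintype.card n := by
  set B := C * (∑ s ∈ S, w s • vecMulVec (v s) (v s)) * Cᵀ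
  have hB : B = ∑ s ∈ S, w s • vecMulVec (C *ᵥ v s) (C *ᵥ v s) :=
    mul_sum_smul_vecMulVec_mul_transpose S w v C
  have hBpsd : B.PosSemidef := hB ▸ posSemidef_sum_smul_vecMulVec_self S hw _
  have htrace : B.trace ≤ c * ∑ s ∈ S, w s := by
    rw [hB, trace_sum_smul_vecMulVec_self, Finset.mul_sum]
    exact Finset.sum_le_sum fun s hs => by nlinarith [hw s hs, hC s hs]
  calc C.det ^ 2 * (∑ s ∈ S, w s • vecMulVec (v s) (v s)).det = B.det := by
        rw [det_mul, det_mul, det_transpose]; ring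
    _ ≤ (B.trace / Fintype.card n) ^ Fintype.card n := hBpsd.det_le_trace_div_card_pow
    _ ≤ _ := by have := hBpsd.trace_nonneg; gcongr

end WeightedGram

section SignMatrix

variable {ι : Type*} [Fintype ι] [DecidableEq ι]

def signMatrix (i₀ : ι) : Matrix ι ι ℝ :=
  (2 : ℝ) • (1 : Matrix ι ι ℝ) - vecMulVec 1 (Pi.single i₀ 1)

theorem signMatrix_mulVec_apply (i₀ : ι) (v : ι → ℝ) (i : ι) :
    (signMatrix i₀ *ᵥ v) i = 2 * v i - v i₀ := by
  rw [signMatrix, sub_mulVec, smul_mulVec, one_mulVec, vecMulVec_mulVec]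
  simp

theorem det_signMatrix (i₀ : ι) : (signMatrix i₀).det = 2 ^ (Fintype.card ι - 1) := by
  have hfactor : signMatrix i₀ = (2 : ℝ) • (1 - vecMulVec (fun _ => 2⁻¹) (Pi.single i₀ 1)) := by
    rw [signMatrix, smul_sub, ← smul_vecMulVec,
      show (2 : ℝ) • (fun _ : ι => (2⁻¹ : ℝ)) = 1 by ext; simp]
  rw [hfactor, det_smul, vecMulVec_eq Unit, det_one_sub_mul_comm, det_unique]
  obtain ⟨m, hm⟩ := Nat.exists_eq_succ_of_ne_zero (Fintype.card_pos_iff.2 ⟨i₀⟩).ne'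
  rw [hm]
  simp
  ring

theorem signMatrix_mulVec_dotProduct_self {i₀ : ι} {v : ι → ℝ}
    (hv : ∀ i, v i = 0 ∨ v i = 1) (hv₀ : v i₀ = 1) :
    (signMatrix i₀ *ᵥ v) ⬝ᵥ (signMatrix i₀ *ᵥ v) = Fintype.card ι := by
  have hsq (i : ι) : (signMatrix i₀ *ᵥ v) i * (signMatrix i₀ *ᵥ v) i = 1 := by
    rcases hv i with h | h <;> norm_num [signMatrix_mulVec_apply, h, hv₀]
  simp [dotProduct, hsq]

end SignMatrix

end Matrix

theorem zero_one_relaxation_bound_general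
    (p : ℕ) (hp : 1 ≤ p) (k : ℝ)
    (lam : (Fin p → Bool) → ℝ)
    (hlam : ∀ s ∈ Finset.univ.filter (fun s : Fin p → Bool => s ⟨0, hp⟩ = true),
      0 ≤ lam s)
    (hsum : ∑ s ∈ Finset.univ.filter (fun s : Fin p → Bool => s ⟨0, hp⟩ = true),
      lam s = k) :
    (∑ s ∈ Finset.univ.filter (fun s : Fin p → Bool => s ⟨0, hp⟩ = true),
        lam s • vecMulVec (fun i => if s i then (1 : ℝ) else 0)
          (fun i => if s i then (1 : ℝ) else 0)).det
      ≤ k ^ p / 2 ^ (2 * (p - 1)) := by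
  set C := signMatrix (⟨0, hp⟩ : Fin p)
  have hsupport : ∀ s ∈ Finset.univ.filter (fun s : Fin p → Bool => s ⟨0, hp⟩ = true),
      (C *ᵥ fun i => if s i then (1 : ℝ) else 0) ⬝ᵥ (C *ᵥ fun i => if s i then (1 : ℝ) else 0)
        ≤ p := fun s hs => by
    rw [signMatrix_mulVec_dotProduct_self (fun i => by split_ifs <;> simp)
      (by simp [(Finset.mem_filter.1 hs).2]), Fintype.card_fin]
  have key := sq_det_mul_det_sum_smul_vecMulVec_le _ hlam _ C hsupport
  rw [det_signMatrix, hsum, Fintype.card_fin, ← pow_mul',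
    mul_div_cancel_left₀ _ (by positivity : (p : ℝ) ≠ 0)] at key
  rwa [le_div_iff₀ (by positivity), mul_comm]

/-- The continuous relaxation over P = {v ∈ {0,1}^p : v₁ = 1} has value at most
k^p / 2^(2(p−1)). -/
theorem zero_one_relaxation_bound
    (p : ℕ) (hp : 1 ≤ p) (k : ℝ) (hk : 0 < k)
    (lam : (Fin p → Bool) → ℝ)
    (hlam : ∀ s ∈ Finset.univ.filter (fun s : Fin p → Bool => s ⟨0, hp⟩ = true),
      0 ≤ lam s)
    (hsum : ∑ s ∈ Finset.univ.filter (fun s : Fin p → Bool => s ⟨0, hp⟩ = true),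
      lam s = k) :
    (∑ s ∈ Finset.univ.filter (fun s : Fin p → Bool => s ⟨0, hp⟩ = true),
        lam s • vecMulVec (fun i => if s i then (1 : ℝ) else 0)
          (fun i => if s i then (1 : ℝ) else 0)).det
      ≤ k ^ p / 2 ^ (2 * (p - 1)) :=
  zero_one_relaxation_bound_general p hp k lam hlam hsum
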